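/- arXiv:1410.3083 — 4 statements merged into one kernel-verified Lean document; each statement's English description precedes it below -/
import Mathlib

section
/- For four sensor regions with all triple intersections non-empty and quadruple intersection empty, given sensor counts (n₁,n₂,n₃,n₄) with nᵢ ≥ 0, the maximum of n·y over the polytope {y ∈ ℝ⁴ : y ≥ 0, Σ_{i∈σ} yᵢ ≤ 1 for every 3-element subset σ ⊆ {1,2,3,4}} equals max(n₁, n₂, n₃, n₄, (n₁+n₂+n₃+n₄)/3). -/
/-!
Weak duality, made explicit. For `|ι| = k + 1`, let `j` minimise `y` and split
`y i = (y i - y j) + y j`. Then `n i ≤ M` against `y i - y j ≥ 0` and `∑ n ≤ k M` against `y j ≥ 0`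
give `n ⬝ y ≤ M (∑ y - (k + 1) y j) + k M y j = M ∑_{i ≠ j} y i ≤ M`, the last step because
`univ.erase j` is a facet of the boundary of the simplex. For the tetrahedron (`k = 3`) the bound
is attained at a unit vector when `M = n m`, and at the barycentre `(1/3, …, 1/3)` when `M = (∑ n) / 3`.
-/

open Finset

section BoundarySimplex

variable {ι : Type*}

theorem sum_mul_le_of_forall_card_eq_sum_le [Fintype ι] [DecidableEq ι] (k : ℕ)
    (hk : Fintype.card ι = k + 1) (n y : ι → ℝ) (M : ℝ) (hM : 0 ≤ M) (hnM : ∀ i, n i ≤ M) (hsum : ∑ i, n i ≤ k * M)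
    (hy : ∀ i, 0 ≤ y i) (hσ : ∀ σ : Finset ι, σ.card = k → ∑ i ∈ σ, y i ≤ 1) :
    ∑ i, n i * y i ≤ M := by
  have hne : (univ : Finset ι).Nonempty := univ_nonempty_iff.2 (Fintype.card_pos_iff.1 (by omega))
  obtain ⟨j, -, hj⟩ := exists_min_image univ y hne
  have hfacet : ∑ i ∈ univ.erase j, y i ≤ 1 :=
    hσ _ (by rw [card_erase_of_mem (mem_univ j), card_univ, hk, Nat.add_sub_cancel])
  have hsplit : ∑ i ∈ univ.erase j, y i = ∑ i, y i - y j := by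
    rw [sum_erase_eq_sub (mem_univ j)]
  calc ∑ i, n i * y i = ∑ i, n i * (y i - y j) + y j * ∑ i, n i := by
        rw [mul_sum, ← sum_add_distrib]; exact sum_congr rfl fun i _ => by ring
    _ ≤ ∑ i, M * (y i - y j) + y j * (k * M) := by
        gcongr with i
        · exact sub_nonneg.2 (hj i (mem_univ i))
        · exact hnM i
        · exact hy j
    _ = M * ∑ i ∈ univ.erase j, y i := by
        rw [← mul_sum, sum_sub_distrib, sum_const, card_univ, hk, hsplit]
        ring
    _ ≤ M := mul_le_of_le_one_right hM hfacet

theorem sum_pi_single_le_one [DecidableEq ι] (k : ι) (σ : Finset ι) :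
    ∑ i ∈ σ, (Pi.single k 1 : ι → ℝ) i ≤ 1 := by
  rw [sum_pi_single']
  split_ifs <;> norm_num

theorem sum_const_inv_card (k : ℕ) (σ : Finset ι) (hσ : σ.card = k) :
    ∑ _i ∈ σ, (k⁻¹ : ℝ) ≤ 1 := by
  rw [sum_const, hσ, nsmul_eq_mul]
  exact mul_inv_le_one

end BoundarySimplex

/-- For the fusion polytope of the boundary of the tetrahedron, the maximum of
n·y equals max(n₁,n₂,n₃,n₄,(n₁+n₂+n₃+n₄)/3). -/
theorem stmt2 (n : Fin 4 → ℝ) (hn : ∀ i, 0 ≤ n i) :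
    IsGreatest
      {v : ℝ | ∃ y : Fin 4 → ℝ, (∀ i, 0 ≤ y i) ∧
        (∀ σ : Finset (Fin 4), σ.card = 3 → ∑ i ∈ σ, y i ≤ 1) ∧
        v = ∑ i, n i * y i}
      (max (max (max (n 0) (n 1)) (max (n 2) (n 3)))
        ((n 0 + n 1 + n 2 + n 3) / 3)) := by
  set P := {v : ℝ | ∃ y : Fin 4 → ℝ, (∀ i, 0 ≤ y i) ∧
    (∀ σ : Finset (Fin 4), σ.card = 3 → ∑ i ∈ σ, y i ≤ 1) ∧ v = ∑ i, n i * y i}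
  set M := max (max (max (n 0) (n 1)) (max (n 2) (n 3))) ((n 0 + n 1 + n 2 + n 3) / 3)
  constructor
  · have vertex (k : Fin 4) : n k ∈ P :=
      ⟨Pi.single k 1, fun i => by simp [Pi.single_apply, apply_ite],
        fun σ _ => sum_pi_single_le_one k σ, by simp [Pi.single_apply]⟩
    have barycentre : (n 0 + n 1 + n 2 + n 3) / 3 ∈ P :=
      ⟨fun _ => (3 : ℕ)⁻¹, fun _ => by positivity, fun σ hσ => sum_const_inv_card 3 σ hσ,
        by rw [Fin.sum_univ_four]; push_cast; ring⟩
    exact max_rec' _ (max_rec' _ (max_rec' _ (vertex 0) (vertex 1))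
      (max_rec' _ (vertex 2) (vertex 3))) barycentre
  · rintro v ⟨y, hy, hσ, rfl⟩
    have hnM : ∀ i, n i ≤ M := by
      intro i; fin_cases i <;> simp [M]
    refine sum_mul_le_of_forall_card_eq_sum_le 3 rfl n y M ((hn 0).trans (hnM 0)) hnM ?_ hy hσ
    rw [Fin.sum_univ_four]
    push_cast
    linarith [show (n 0 + n 1 + n 2 + n 3) / 3 ≤ M from le_max_right _ _]
end

section
/- Let S = (S₁,…,S_R) be a generic sensor configuration with integer sensor measurements n = (n₁,…,n_R). If k is an achievable total integer count (i.e., there is an assignment of non-negative integers to the atoms, summing over the atoms contained in each S_r to n_r, with total k), and k is strictly less than the maximum achievable total count n₁+⋯+n_R, then k+1 is also achievable. Consequently the set of achievable integer total counts is an interval of integers. -/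
/-!
Counting each sensor over the atoms it contains gives `∑ r, n r = ∑ A, #A * m A`, so a total
`k = ∑ A, m A` below `∑ r, n r` forces some atom `A` lying in at least two sensors to carry
positive mass. Pick `i ∈ A` and move one unit of mass from `A` to `{i}` and to `A \ {i}`: every
sensor sees the same count and the total grows by one. Genericity is what guarantees that
`{i}` and `A \ {i}` index atoms again, i.e. that the new assignment is admissible.
-/

open Finset

section Transfer

variable {α : Type*} [Fintype α] [DecidableEq α]

theorem sum_mul_tsub_single_add (f m : α → ℕ) {a : α} (ha : 1 ≤ m a) :
    ∑ x, f x * (m - Pi.single a 1 : α → ℕ) x + f a = ∑ x, f x * m x := by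
  have hm : m = (m - Pi.single a 1 : α → ℕ) + Pi.single a 1 := by
    ext x
    by_cases hx : x = a
    · subst hx; simp; omega
    · simp [hx]
  conv_rhs => rw [hm]
  simp [mul_add, sum_add_distrib, Pi.single_apply]

theorem sum_mul_transfer (f m : α → ℕ) {a : α} (ha : 1 ≤ m a) (b c : α) :
    ∑ x, f x * (m - Pi.single a 1 + Pi.single b 1 + Pi.single c 1 : α → ℕ) x + f a =
      ∑ x, f x * m x + f b + f c := by
  rw [← sum_mul_tsub_single_add f m ha]
  simp only [Pi.add_apply, mul_add, sum_add_distrib, Pi.single_apply, mul_ite, mul_one,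
    mul_zero, sum_ite_eq', mem_univ, if_true]
  omega

end Transfer

section Split

variable {ι : Type*}

theorem exists_pos_two_le_card_of_sum_lt [Fintype ι] (m : Finset ι → ℕ)
    (h : ∑ A, m A < ∑ A, #A * m A) : ∃ A, 0 < m A ∧ 2 ≤ #A := by
  by_contra! hsmall
  have hle : ∀ A ∈ univ, #A * m A ≤ m A := fun A _ => by
    rcases (m A).eq_zero_or_pos with h0 | hpos
    · simp [h0]
    · exact (Nat.mul_le_mul_right _ (Nat.lt_succ_iff.mp (hsmall A hpos))).trans_eq (one_mul _)
  exact (sum_le_sum hle).not_gt h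

variable [DecidableEq ι]

theorem sum_card_mul_eq_sum_sum_ite [Fintype ι] (m : Finset ι → ℕ) :
    ∑ A, #A * m A = ∑ r, ∑ A, if r ∈ A then m A else 0 := by
  rw [sum_comm]
  refine sum_congr rfl fun A _ => ?_
  rw [sum_ite_mem, univ_inter, sum_const, smul_eq_mul]

def splitAt (m : Finset ι → ℕ) (A : Finset ι) (i : ι) : Finset ι → ℕ :=
  m - Pi.single A 1 + Pi.single {i} 1 + Pi.single (A.erase i) 1

variable {m : Finset ι → ℕ} {A : Finset ι} {i : ι}

theorem sum_ite_mem_splitAt [Fintype ι] (hi : i ∈ A) (hA : 1 ≤ m A) (r : ι) :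
    (∑ B, if r ∈ B then splitAt m A i B else 0) = ∑ B, if r ∈ B then m B else 0 := by
  have h := sum_mul_transfer (fun B => if r ∈ B then 1 else 0) m hA {i} (A.erase i)
  have hmem : (if r ∈ A then 1 else 0) =
      (if r ∈ ({i} : Finset ι) then 1 else 0) + (if r ∈ A.erase i then 1 else 0) := by
    by_cases hri : r = i
    · subst hri; simp [hi]
    · simp [hri]
  simp only [ite_mul, one_mul, zero_mul] at h
  unfold splitAt
  omega

theorem sum_splitAt [Fintype ι] (hA : 1 ≤ m A) : ∑ B, splitAt m A i B = ∑ B, m B + 1 := by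
  have h := sum_mul_transfer (fun _ => 1) m hA {i} (A.erase i)
  simp only [one_mul] at h
  unfold splitAt
  omega

theorem splitAt_eq_zero {B : Finset ι} (hB : m B = 0) (hBi : B ≠ {i}) (hBA : B ≠ A.erase i) :
    splitAt m A i B = 0 := by
  simp [splitAt, hB, Pi.single_apply, hBi, hBA]

end Split

section Atoms

variable {Ω ι : Type*} [Fintype ι] [DecidableEq ι]

/-- Atoms are indexed by the set `A` of sensors containing them; this is the (possibly empty)
atom with index `A`. -/
def atomCell (S : ι → Set Ω) (A : Finset ι) : Set Ω :=
  (⋂ i ∈ A, S i) ∩ ⋂ j ∈ Aᶜ, (S j)ᶜ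

def IsGeneric (S : ι → Set Ω) : Prop :=
  ∀ A : Finset ι, A.Nonempty → (⋂ i ∈ A, S i).Nonempty → ¬ (⋂ i ∈ A, S i) ⊆ ⋃ j ∈ Aᶜ, S j

theorem IsGeneric.atomCell_nonempty_of_subset {S : ι → Set Ω} (hS : IsGeneric S)
    {A B : Finset ι} (hB : B.Nonempty) (hBA : B ⊆ A) (hA : (atomCell S A).Nonempty) :
    (atomCell S B).Nonempty := by
  obtain ⟨x, hx, -⟩ := hA
  have hxB : x ∈ ⋂ i ∈ B, S i :=
    Set.mem_iInter₂.mpr fun i hi => Set.mem_iInter₂.mp hx i (hBA hi)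
  obtain ⟨y, hyB, hyout⟩ := Set.not_subset.mp (hS B hB ⟨x, hxB⟩)
  refine ⟨y, hyB, Set.mem_iInter₂.mpr fun j hj hyj => hyout ?_⟩
  exact Set.mem_iUnion₂.mpr ⟨j, hj, hyj⟩

end Atoms

theorem stmt5_general {Ω : Type*} {R : ℕ} (S : Fin R → Set Ω)
    (hgen : ∀ A : Finset (Fin R), A.Nonempty → (⋂ i ∈ A, S i).Nonempty →
      ¬ (⋂ i ∈ A, S i) ⊆ ⋃ j ∈ Aᶜ, S j)
    (n : Fin R → ℕ) (k : ℕ)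
    (hk : ∃ m : Finset (Fin R) → ℕ,
      (∀ A : Finset (Fin R),
        ¬ (A.Nonempty ∧ ((⋂ i ∈ A, S i) ∩ (⋂ j ∈ Aᶜ, (S j)ᶜ)).Nonempty) →
        m A = 0) ∧
      (∀ r, (∑ A : Finset (Fin R), if r ∈ A then m A else 0) = n r) ∧
      (∑ A : Finset (Fin R), m A) = k)
    (hlt : k < ∑ r, n r) :
    ∃ m : Finset (Fin R) → ℕ,
      (∀ A : Finset (Fin R),
        ¬ (A.Nonempty ∧ ((⋂ i ∈ A, S i) ∩ (⋂ j ∈ Aᶜ, (S j)ᶜ)).Nonempty) →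
        m A = 0) ∧
      (∀ r, (∑ A : Finset (Fin R), if r ∈ A then m A else 0) = n r) ∧
      (∑ A : Finset (Fin R), m A) = k + 1 := by
  obtain ⟨m, hatoms, hcount, rfl⟩ := hk
  have hS : IsGeneric S := hgen
  have hmass : ∑ A, m A < ∑ A, #A * m A := by
    simpa only [sum_card_mul_eq_sum_sum_ite, hcount] using hlt
  obtain ⟨A, hApos, hA2⟩ := exists_pos_two_le_card_of_sum_lt m hmass
  obtain ⟨⟨i, hi⟩, hAcell⟩ : A.Nonempty ∧ (atomCell S A).Nonempty := by
    by_contra h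
    exact hApos.ne' (hatoms A h)
  have hsingle : ({i} : Finset (Fin R)).Nonempty ∧ (atomCell S {i}).Nonempty :=
    ⟨singleton_nonempty i, hS.atomCell_nonempty_of_subset (singleton_nonempty i)
      (singleton_subset_iff.mpr hi) hAcell⟩
  have herase_ne : (A.erase i).Nonempty := by
    rw [← card_pos, card_erase_of_mem hi]
    omega
  have herase : (A.erase i).Nonempty ∧ (atomCell S (A.erase i)).Nonempty :=
    ⟨herase_ne, hS.atomCell_nonempty_of_subset herase_ne (erase_subset i A) hAcell⟩
  refine ⟨splitAt m A i, fun B hB => ?_, fun r => ?_, sum_splitAt hApos⟩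
  · exact splitAt_eq_zero (hatoms B hB) (by rintro rfl; exact hB hsingle)
      (by rintro rfl; exact hB herase)
  · rw [sum_ite_mem_splitAt hi hApos, hcount]

/-- For a generic sensor configuration with integer measurements, if k is an
achievable total integer count and k is strictly less than the maximum n₁+⋯+n_R,
then k+1 is also achievable. -/
theorem stmt5 {Ω : Type*} {R : ℕ} (S : Fin R → Set Ω)
    (hcover : (⋃ r, S r) = Set.univ)
    (hgen : ∀ A : Finset (Fin R), A.Nonempty → (⋂ i ∈ A, S i).Nonempty →
      ¬ (⋂ i ∈ A, S i) ⊆ ⋃ j ∈ Aᶜ, S j)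
    (n : Fin R → ℕ) (k : ℕ)
    (hk : ∃ m : Finset (Fin R) → ℕ,
      (∀ A : Finset (Fin R),
        ¬ (A.Nonempty ∧ ((⋂ i ∈ A, S i) ∩ (⋂ j ∈ Aᶜ, (S j)ᶜ)).Nonempty) →
        m A = 0) ∧
      (∀ r, (∑ A : Finset (Fin R), if r ∈ A then m A else 0) = n r) ∧
      (∑ A : Finset (Fin R), m A) = k)
    (hlt : k < ∑ r, n r) :
    ∃ m : Finset (Fin R) → ℕ,
      (∀ A : Finset (Fin R),
        ¬ (A.Nonempty ∧ ((⋂ i ∈ A, S i) ∩ (⋂ j ∈ Aᶜ, (S j)ᶜ)).Nonempty) →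
        m A = 0) ∧
      (∀ r, (∑ A : Finset (Fin R), if r ∈ A then m A else 0) = n r) ∧
      (∑ A : Finset (Fin R), m A) = k + 1 :=
  stmt5_general S hgen n k hk hlt
end

section
/- Let S be a generic sensor configuration with constraint matrix A (rows of Aᵀ indexed by atoms), and let C(S) = {y : Aᵀ y ≤ 1} be the fusion polytope. Then for every non-negative measurement vector n, max{n·y : y ∈ C(S)} = max{n·y : y ∈ C(S) ∩ P}, where P is the non-negative orthant. Key step: if a is a row of Aᵀ (the 0–1 indicator of an atom's membership in the sensor regions) and y ∈ C(S), then the vector y' obtained from y by replacing all negative coordinates by 0 also satisfies Aᵀ y' ≤ 1, because genericity implies that for any row a of Aᵀ and any coordinate subset T, the vector that agrees with a off T and is 0 on T is again a row of Aᵀ. -/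
/-!
Clipping the negative coordinates of a feasible `y` to `0` keeps it feasible: the row `b` of
`Aᵀ` applied to the clipped vector equals the subrow of `b` supported on `{r | 0 ≤ y r}`
applied to `y`, and by genericity that subrow is zero or again a row of `Aᵀ`. As `n ≥ 0`,
clipping does not decrease `n · y`, so both suprema are taken over mutually cofinal sets.
-/

open Finset

variable {ι κ 𝕜 : Type*} [Fintype ι]

/-- Genericity of a sensor configuration, read off its matrix `Aᵀ`. -/
def Matrix.IsSubrowClosed [Zero 𝕜] (B : Matrix κ ι 𝕜) : Prop :=
  ∀ j : κ, ∀ a' : ι → 𝕜, (∀ r, a' r = 0 ∨ a' r = B j r) → a' ≠ 0 → ∃ j' : κ, ∀ r, B j' r = a' r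

theorem sum_mul_max_zero_eq_sum_ite_mul [NonUnitalNonAssocSemiring 𝕜]
    [LinearOrder 𝕜] (b y : ι → 𝕜) :
    ∑ r, b r * max (y r) 0 = ∑ r, (if 0 ≤ y r then b r else 0) * y r := by
  refine sum_congr rfl fun r _ => ?_
  split_ifs with hr
  · rw [max_eq_left hr]
  · rw [max_eq_right (not_le.mp hr).le, mul_zero, zero_mul]

theorem Matrix.IsSubrowClosed.sum_mul_max_zero_le_one [Ring 𝕜] [LinearOrder 𝕜]
    [IsStrictOrderedRing 𝕜] {B : Matrix κ ι 𝕜} (hB : B.IsSubrowClosed) {y : ι → 𝕜} (hy : ∀ j, ∑ r, B j r * y r ≤ 1) (j : κ) :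
    ∑ r, B j r * max (y r) 0 ≤ 1 := by
  rw [sum_mul_max_zero_eq_sum_ite_mul]
  by_cases h0 : (fun r => if 0 ≤ y r then B j r else 0) = 0
  · simp only [funext_iff, Pi.zero_apply] at h0
    simp [h0]
  · obtain ⟨j', hj'⟩ := hB j _ (fun r => by split_ifs <;> simp) h0
    simpa only [hj'] using hy j'

theorem stmt8_general {K R : ℕ} (B : Matrix (Fin K) (Fin R) ℝ)
    (hgen : ∀ j : Fin K, ∀ a' : Fin R → ℝ,
      (∀ r, a' r = 0 ∨ a' r = B j r) → a' ≠ 0 →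
      ∃ j' : Fin K, ∀ r, B j' r = a' r)
    (n : Fin R → ℝ) (hn : ∀ r, 0 ≤ n r) :
    sSup {v : ℝ | ∃ y : Fin R → ℝ, (∀ j, ∑ r, B j r * y r ≤ 1) ∧
        v = ∑ r, n r * y r} =
    sSup {v : ℝ | ∃ y : Fin R → ℝ, (∀ j, ∑ r, B j r * y r ≤ 1) ∧
        (∀ r, 0 ≤ y r) ∧ v = ∑ r, n r * y r} := by
  refine csSup_eq_csSup_of_forall_exists_le ?_ ?_
  · rintro _ ⟨y, hy, rfl⟩
    have hclip := Matrix.IsSubrowClosed.sum_mul_max_zero_le_one hgen hy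
    refine ⟨_, ⟨fun r => max (y r) 0, hclip, fun r => le_max_right _ _, rfl⟩, ?_⟩
    exact sum_le_sum fun r _ => mul_le_mul_of_nonneg_left (le_max_left _ _) (hn r)
  · rintro _ ⟨y, hy, -, rfl⟩
    exact ⟨_, ⟨y, hy, rfl⟩, le_rfl⟩

/-- For a generic configuration (in matrix form: every non-zero subrow of a row
of Aᵀ is again a row of Aᵀ), the maximum of n·y over the fusion polyhedron
equals the maximum over its intersection with the positive orthant.
Here `B` is the matrix Aᵀ whose rows are indexed by atoms. -/
theorem stmt8 {K R : ℕ} (B : Matrix (Fin K) (Fin R) ℝ)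
    (hB : ∀ j r, B j r = 0 ∨ B j r = 1)
    (hgen : ∀ j : Fin K, ∀ a' : Fin R → ℝ,
      (∀ r, a' r = 0 ∨ a' r = B j r) → a' ≠ 0 →
      ∃ j' : Fin K, ∀ r, B j' r = a' r)
    (n : Fin R → ℝ) (hn : ∀ r, 0 ≤ n r) :
    sSup {v : ℝ | ∃ y : Fin R → ℝ, (∀ j, ∑ r, B j r * y r ≤ 1) ∧
        v = ∑ r, n r * y r} =
    sSup {v : ℝ | ∃ y : Fin R → ℝ, (∀ j, ∑ r, B j r * y r ≤ 1) ∧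
        (∀ r, 0 ≤ y r) ∧ v = ∑ r, n r * y r} :=
  stmt8_general B hgen n hn
end

section
/- Let G = (V,E) be a finite graph. Every extreme point of FRAC(G) = {x ∈ ℝ^V : x ≥ 0, x_u + x_w ≤ 1 for all (u,w) ∈ E} has all coordinates in {0, 1/2, 1}. -/
/-!
Let `x ∈ FRAC(G)` and let `d` move every coordinate of `x` outside `{0, 1}` towards `1/2` at
unit speed. Across an edge with `x u + x w = 1` the two endpoints move in opposite directions,
so tight edge constraints stay tight; zero coordinates do not move; every other constraint is
strict and survives a small move. Hence `x ± t d ∈ FRAC(G)` for small `t`, and since `x` is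
their midpoint, extremality forces `d = 0`, i.e. every coordinate lies in `{0, 1/2, 1}`.
-/

open Filter Topology

section ExtremePoints

variable {E : Type*} [AddCommGroup E] [Module ℝ E] {s : Set E} {x : E}

lemma eq_zero_of_add_mem_of_sub_mem_of_mem_extremePoints (hx : x ∈ s.extremePoints ℝ) {v : E}
    (hadd : x + v ∈ s) (hsub : x - v ∈ s) : v = 0 :=
  add_eq_left.mp (hx.2 hadd hsub (mem_openSegment_add_sub x v))

lemma eq_zero_of_eventually_add_smul_mem_of_mem_extremePoints (hx : x ∈ s.extremePoints ℝ)
    {d : E} (h : ∀ᶠ t in 𝓝 (0 : ℝ), x + t • d ∈ s) : d = 0 := by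
  have hsub : ∀ᶠ t in 𝓝 (0 : ℝ), x + (-t) • d ∈ s :=
    (tendsto_neg (0 : ℝ)).eventually (by rwa [neg_zero])
  obtain ⟨t, ⟨htadd, htsub⟩, ht⟩ :=
    (((h.and hsub).filter_mono nhdsWithin_le_nhds).and self_mem_nhdsWithin).exists
      (f := 𝓝[≠] (0 : ℝ))
  rw [neg_smul, ← sub_eq_add_neg] at htsub
  exact (smul_eq_zero.mp
    (eq_zero_of_add_mem_of_sub_mem_of_mem_extremePoints hx htadd htsub)).resolve_left ht

end ExtremePoints

lemma eventually_le_add_mul {a b c : ℝ} (h : c < a ∨ c ≤ a ∧ b = 0) :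
    ∀ᶠ t in 𝓝 (0 : ℝ), c ≤ a + t * b := by
  rcases h with h | ⟨h, rfl⟩
  · have : Tendsto (fun t : ℝ => a + t * b) (𝓝 0) (𝓝 a) := by
      simpa using (show Continuous fun t : ℝ => a + t * b by fun_prop).tendsto 0
    exact (this.eventually_const_lt h).mono fun _ => le_of_lt
  · simp [h]

lemma eventually_add_mul_le {a b c : ℝ} (h : a < c ∨ a ≤ c ∧ b = 0) :
    ∀ᶠ t in 𝓝 (0 : ℝ), a + t * b ≤ c := by
  have := eventually_le_add_mul (a := -a) (b := -b) (c := -c) (by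
    rcases h with h | ⟨h, rfl⟩ <;> simp [h])
  exact this.mono fun t ht => by linarith

namespace SimpleGraph

variable {V : Type*} (G : SimpleGraph V)

def fractionalStableSetPolytope : Set (V → ℝ) :=
  {y | (∀ v, 0 ≤ y v) ∧ ∀ u w, G.Adj u w → y u + y w ≤ 1}

variable {G}

lemma eventually_add_smul_mem_fractionalStableSetPolytope [Finite V] {x d : V → ℝ}
    (hx : x ∈ G.fractionalStableSetPolytope) (hzero : ∀ u, x u = 0 → d u = 0)
    (htight : ∀ u w, G.Adj u w → x u + x w = 1 → d u + d w = 0) :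
    ∀ᶠ t in 𝓝 (0 : ℝ), x + t • d ∈ G.fractionalStableSetPolytope := by
  have hv (u : V) : ∀ᶠ t in 𝓝 (0 : ℝ), 0 ≤ x u + t * d u :=
    eventually_le_add_mul <| (hx.1 u).lt_or_eq.imp_right fun h => ⟨h.le, hzero u h.symm⟩
  have he (u w : V) : ∀ᶠ t in 𝓝 (0 : ℝ), G.Adj u w → x u + x w + t * (d u + d w) ≤ 1 :=
    eventually_imp_distrib_left.2 fun huw => eventually_add_mul_le <|
      (hx.2 u w huw).lt_or_eq.imp_right fun h => ⟨h.le, htight u w huw h⟩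
  filter_upwards [eventually_all.2 hv, eventually_all.2 fun u => eventually_all.2 (he u)]
    with t hv he
  refine ⟨hv, fun u w huw => ?_⟩
  have := he u w huw
  simp only [Pi.add_apply, Pi.smul_apply, smul_eq_mul]
  linarith

end SimpleGraph

section TowardHalf

variable {V : Type*}

noncomputable def towardHalf (x : V → ℝ) (u : V) : ℝ :=
  if x u = 0 ∨ x u = 1 then 0 else Real.sign (1 / 2 - x u)

lemma towardHalf_eq_zero_iff {x : V → ℝ} {u : V} :
    towardHalf x u = 0 ↔ x u = 0 ∨ x u = 1 / 2 ∨ x u = 1 := by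
  unfold towardHalf
  split_ifs with h
  · tauto
  · rw [Real.sign_eq_zero_iff, sub_eq_zero]
    tauto

lemma towardHalf_add_towardHalf {x : V → ℝ} {u w : V} (h : x u + x w = 1) :
    towardHalf x u + towardHalf x w = 0 := by
  have hw : x w = 1 - x u := by linarith
  have hends : (x w = 0 ∨ x w = 1) ↔ (x u = 0 ∨ x u = 1) := by
    rw [hw, sub_eq_zero, sub_eq_self, eq_comm (a := (1 : ℝ)), or_comm]
  have hsign : 1 / 2 - x w = -(1 / 2 - x u) := by rw [hw]; ring
  by_cases hu : x u = 0 ∨ x u = 1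
  · simp [towardHalf, hu, hends.2 hu]
  · rw [towardHalf, towardHalf, if_neg hu, if_neg (mt hends.1 hu), hsign, Real.sign_neg,
      add_neg_cancel]

end TowardHalf

/-- Every extreme point of FRAC(G) has all coordinates in {0, 1/2, 1}. -/
theorem stmt12 {V : Type*} [Fintype V] (G : SimpleGraph V) (x : V → ℝ)
    (hx : x ∈ Set.extremePoints ℝ
      {y : V → ℝ | (∀ v, 0 ≤ y v) ∧ ∀ u w, G.Adj u w → y u + y w ≤ 1}) :
    ∀ v, x v = 0 ∨ x v = 1 / 2 ∨ x v = 1 := by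
  have hd : towardHalf x = 0 :=
    eq_zero_of_eventually_add_smul_mem_of_mem_extremePoints hx <|
      SimpleGraph.eventually_add_smul_mem_fractionalStableSetPolytope hx.1
        (fun u hu => by simp [towardHalf, hu]) fun _ _ _ => towardHalf_add_towardHalf
  exact fun v => towardHalf_eq_zero_iff.1 (congrFun hd v)
end
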